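/- arXiv:2407.13842 — 2 statements merged into one kernel-verified Lean document; each statement's English description precedes it below -/
import Mathlib

section
/- Let μ be a probability measure on a measurable space Ω and let G, S, T, T' be measurable events with μ(G) > 0, μ(G ∩ T ∩ S) > 0, μ(G ∩ T') > 0, μ(T ∩ S) > 0, μ(T' ∩ S) > 0, μ(S) > 0, μ(G ∩ S) > 0 and μ(S ∩ T ∩ T'ᶜ) > 0. Assume the two conditional-independence hypotheses (i) μ(T'ᶜ | G ∩ T ∩ S) = μ(T'ᶜ | G) and (ii) μ(S | G ∩ T') = μ(S | G). Then μ(G | S ∩ T ∩ T'ᶜ) = (μ(T ∩ S) / μ(S ∩ T ∩ T'ᶜ)) · μ(G | T ∩ S) · (1 − μ(G | T' ∩ S) · μ(T' ∩ S) / (μ(G | S) · μ(S))). -/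
/-!
Hypothesis (ii) says that, given `G`, the events `S` and `T'` are independent; by Bayes this is
symmetric, and passing to complements gives `μ[T'ᶜ | G ∩ S] = μ[T'ᶜ | G]`. Together with (i)
this is `μ[T'ᶜ | G ∩ T ∩ S] = μ[T'ᶜ | G ∩ S]`. On the right-hand side the last factor is
`1 - μ[T' | G ∩ S] = μ[T'ᶜ | G ∩ S]` and the first two multiply to `μ(G ∩ T ∩ S) / μ(S ∩ T ∩ T'ᶜ)`,
so the product is `μ(G ∩ T ∩ S ∩ T'ᶜ) / μ(S ∩ T ∩ T'ᶜ)`, the left-hand side.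
-/

open MeasureTheory ProbabilityTheory
open scoped ProbabilityTheory

namespace ProbabilityTheory

variable {Ω : Type*} [MeasurableSpace Ω] {μ : Measure Ω} [IsFiniteMeasure μ] {A B C D : Set Ω}

theorem cond_inter_eq_cond_comm (hB : MeasurableSet B) (hA : MeasurableSet A)
    (hC : MeasurableSet C) (hBA : μ (B ∩ A) ≠ 0) (h : μ[A | B ∩ C] = μ[A | B]) :
    μ[C | B ∩ A] = μ[C | B] := by
  have hA_pos : μ[A | B] ≠ 0 := (cond_pos_of_inter_ne_zero hB hBA).ne'
  rw [← cond_cond_eq_cond_inter hB hA, cond_eq_inv_mul_cond_mul hA hC,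
    cond_cond_eq_cond_inter hB hC, h, ENNReal.inv_mul_cancel hA_pos (measure_ne_top _ _), one_mul]

theorem cond_compl_eq_of_cond_eq (hC : MeasurableSet C) (hB : μ B ≠ 0) (hD : μ D ≠ 0)
    (h : μ[C | D] = μ[C | B]) : μ[Cᶜ | D] = μ[Cᶜ | B] := by
  have := cond_isProbabilityMeasure hB
  have := cond_isProbabilityMeasure hD
  rw [prob_compl_eq_one_sub hC, prob_compl_eq_one_sub hC, h]

end ProbabilityTheory

theorem stmt_3_general {Ω : Type*} [MeasurableSpace Ω] (μ : Measure Ω) [IsProbabilityMeasure μ]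
    (G S T T' : Set Ω)
    (hGm : MeasurableSet G) (hSm : MeasurableSet S)
    (hTm : MeasurableSet T) (hT'm : MeasurableSet T')
    (hG : 0 < μ G) (hGS : 0 < μ (G ∩ S))
    (hindep₁ : μ[T'ᶜ | G ∩ T ∩ S] = μ[T'ᶜ | G])
    (hindep₂ : μ[S | G ∩ T'] = μ[S | G]) :
    μ[G | S ∩ T ∩ T'ᶜ] = (μ (T ∩ S) / μ (S ∩ T ∩ T'ᶜ)) * μ[G | T ∩ S]
      * (1 - μ[G | T' ∩ S] * μ (T' ∩ S) / (μ[G | S] * μ S)) := by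
  have hT'_indep : μ[T' | G ∩ S] = μ[T' | G] :=
    cond_inter_eq_cond_comm hGm hSm hT'm hGS.ne' hindep₂
  have hT'c : μ[T'ᶜ | G ∩ T ∩ S] = μ[T'ᶜ | G ∩ S] :=
    hindep₁.trans (cond_compl_eq_of_cond_eq hT'm hG.ne' hGS.ne' hT'_indep).symm
  have hneg : 1 - μ[G | T' ∩ S] * μ (T' ∩ S) / (μ[G | S] * μ S) = μ[T'ᶜ | G ∩ S] := by
    have := cond_isProbabilityMeasure hGS.ne'
    rw [cond_mul_eq_inter (hT'm.inter hSm), cond_mul_eq_inter hSm, prob_compl_eq_one_sub hT'm,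
      cond_apply (hGm.inter hSm), ← ENNReal.div_eq_inv_mul, Set.inter_comm S G,
      show T' ∩ S ∩ G = G ∩ S ∩ T' by ext; simp only [Set.mem_inter_iff]; tauto]
  calc μ[G | S ∩ T ∩ T'ᶜ]
      = (μ (S ∩ T ∩ T'ᶜ))⁻¹ * μ (G ∩ T ∩ S ∩ T'ᶜ) := by
        rw [cond_apply ((hSm.inter hTm).inter hT'm.compl)]
        congr 2; ext; simp only [Set.mem_inter_iff]; tauto
    _ = (μ (S ∩ T ∩ T'ᶜ))⁻¹ * (μ[G | T ∩ S] * μ (T ∩ S) * μ[T'ᶜ | G ∩ T ∩ S]) := by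
        rw [← cond_mul_eq_inter ((hGm.inter hTm).inter hSm), cond_mul_eq_inter (hTm.inter hSm),
          show T ∩ S ∩ G = G ∩ T ∩ S by ext; simp only [Set.mem_inter_iff]; tauto]
        ring
    _ = _ := by
        rw [hT'c, hneg, ENNReal.div_eq_inv_mul]
        ring

theorem stmt_3 {Ω : Type*} [MeasurableSpace Ω] (μ : Measure Ω) [IsProbabilityMeasure μ]
    (G S T T' : Set Ω)
    (hGm : MeasurableSet G) (hSm : MeasurableSet S)
    (hTm : MeasurableSet T) (hT'm : MeasurableSet T')
    (hG : 0 < μ G) (hGTS : 0 < μ (G ∩ T ∩ S)) (hGT' : 0 < μ (G ∩ T'))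
    (hTS : 0 < μ (T ∩ S)) (hT'S : 0 < μ (T' ∩ S)) (hS : 0 < μ S)
    (hGS : 0 < μ (G ∩ S)) (hSTT' : 0 < μ (S ∩ T ∩ T'ᶜ))
    (hindep₁ : μ[T'ᶜ | G ∩ T ∩ S] = μ[T'ᶜ | G])
    (hindep₂ : μ[S | G ∩ T'] = μ[S | G]) :
    μ[G | S ∩ T ∩ T'ᶜ] = (μ (T ∩ S) / μ (S ∩ T ∩ T'ᶜ)) * μ[G | T ∩ S]
      * (1 - μ[G | T' ∩ S] * μ (T' ∩ S) / (μ[G | S] * μ S)) :=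
  stmt_3_general μ G S T T' hGm hSm hTm hT'm hG hGS hindep₁ hindep₂
end

section
/- Let β : ℕ → ℝ satisfy 0 < β n < 1 for all n, with ∑ β n divergent (β not summable), let g₀ : ℝ, and define the forward-process laws μ : ℕ → Measure ℝ by μ 0 = Measure.dirac g₀ and μ (n+1) = (Measure.map (fun x => Real.sqrt (1 − β n) * x) (μ n)) ∗ gaussianReal 0 (β n). Then the sequence of probability measures μ n converges in distribution (weak convergence of probability measures on ℝ) to the standard Gaussian gaussianReal 0 1. -/
/-!
Scaling by `√(1 - βₙ)` and convolving with `N(0, βₙ)` keeps a Gaussian Gaussian, so by induction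
the `n`-th law is `N(√ᾱₙ g₀, 1 - ᾱₙ)` with `ᾱₙ = ∏_{k<n} (1 - βₖ)`. Since `1 - x ≤ exp (-x)`,
`ᾱₙ ≤ exp (-∑_{k<n} βₖ) → 0`, so the characteristic functions converge to that of `N(0, 1)`, and
Lévy's continuity theorem gives weak convergence.
-/

open MeasureTheory ProbabilityTheory
open scoped MeasureTheory NNReal

open Filter Topology Finset

theorem tendsto_prod_one_sub_of_not_summable {β : ℕ → ℝ} (hβ : ∀ n, 0 ≤ β n ∧ β n ≤ 1)
    (hns : ¬ Summable β) :
    Tendsto (fun n => ∏ k ∈ range n, (1 - β k)) atTop (𝓝 0) := by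
  have hsum : Tendsto (fun n => ∑ k ∈ range n, β k) atTop atTop :=
    (not_summable_iff_tendsto_nat_atTop_of_nonneg fun k => (hβ k).1).mp hns
  have hle : ∀ n, ∏ k ∈ range n, (1 - β k) ≤ Real.exp (-∑ k ∈ range n, β k) := by
    intro n
    rw [← sum_neg_distrib, Real.exp_sum]
    refine prod_le_prod (fun k _ => sub_nonneg.2 (hβ k).2) fun k _ => ?_
    linarith [Real.add_one_le_exp (-β k)]
  exact squeeze_zero (fun n => prod_nonneg fun k _ => sub_nonneg.2 (hβ k).2) hle
    (Real.tendsto_exp_neg_atTop_nhds_zero.comp hsum)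

theorem tendsto_gaussianReal {m : ℕ → ℝ} {v : ℕ → ℝ≥0} {m₀ : ℝ} {v₀ : ℝ≥0}
    (hm : Tendsto m atTop (𝓝 m₀)) (hv : Tendsto v atTop (𝓝 v₀)) :
    Tendsto (fun n => (⟨gaussianReal (m n) (v n), inferInstance⟩ : ProbabilityMeasure ℝ))
      atTop (𝓝 ⟨gaussianReal m₀ v₀, inferInstance⟩ : Filter (ProbabilityMeasure ℝ)) := by
  refine ProbabilityMeasure.tendsto_iff_tendsto_charFun.2 fun t => ?_
  simp only [ProbabilityMeasure.coe_mk, charFun_gaussianReal]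
  have hm' : Tendsto (fun n => (m n : ℂ)) atTop (𝓝 m₀) :=
    (Complex.continuous_ofReal.tendsto _).comp hm
  have hv' : Tendsto (fun n => ((v n : ℝ) : ℂ)) atTop (𝓝 (v₀ : ℝ)) :=
    (Complex.continuous_ofReal.tendsto _).comp (NNReal.tendsto_coe.2 hv)
  exact (Complex.continuous_exp.tendsto _).comp
    (((tendsto_const_nhds.mul hm').mul_const _).sub ((hv'.mul_const _).div_const _))

theorem forwardProcess_eq_gaussianReal {β : ℕ → ℝ} (hβ : ∀ n, 0 ≤ β n ∧ β n ≤ 1) {g₀ : ℝ}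
    {μ : ℕ → Measure ℝ} (hμ0 : μ 0 = Measure.dirac g₀)
    (hμ : ∀ n, μ (n + 1) = Measure.map (fun x => Real.sqrt (1 - β n) * x) (μ n)
      ∗ gaussianReal 0 (β n).toNNReal) (n : ℕ) :
    μ n = gaussianReal (Real.sqrt (∏ k ∈ range n, (1 - β k)) * g₀)
      (1 - ∏ k ∈ range n, (1 - β k)).toNNReal := by
  induction n with
  | zero => simp [hμ0, gaussianReal_zero_var]
  | succ n ih =>
    have h1β : 0 ≤ 1 - β n := sub_nonneg.2 (hβ n).2
    have hprod_le : ∏ k ∈ range n, (1 - β k) ≤ 1 :=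
      prod_le_one (fun k _ => sub_nonneg.2 (hβ k).2) fun k _ => sub_le_self _ (hβ k).1
    rw [hμ n, ih, gaussianReal_map_const_mul, gaussianReal_conv_gaussianReal, add_zero,
      prod_range_succ, Real.sqrt_mul' _ h1β]
    congr 1
    · ring
    ext
    simp only [NNReal.coe_add, NNReal.coe_mul, NNReal.coe_mk, Real.sq_sqrt h1β]
    rw [Real.coe_toNNReal _ (sub_nonneg.2 hprod_le), Real.coe_toNNReal _ (hβ n).1,
      Real.coe_toNNReal _ (sub_nonneg.2 (mul_le_one₀ hprod_le h1β (sub_le_self _ (hβ n).1)))]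
    ring

theorem stmt_8 (β : ℕ → ℝ) (hβ : ∀ n, 0 < β n ∧ β n < 1) (hns : ¬ Summable β) (g₀ : ℝ)
    (μ : ℕ → ProbabilityMeasure ℝ)
    (hμ0 : (μ 0 : Measure ℝ) = Measure.dirac g₀)
    (hμ : ∀ n, (μ (n + 1) : Measure ℝ)
      = Measure.conv (Measure.map (fun x => Real.sqrt (1 - β n) * x) (μ n : Measure ℝ))
          (gaussianReal 0 (β n).toNNReal)) :
    Filter.Tendsto μ Filter.atTop (nhds ⟨gaussianReal 0 1, inferInstance⟩) := by
  have hβ' : ∀ n, 0 ≤ β n ∧ β n ≤ 1 := fun n => ⟨(hβ n).1.le, (hβ n).2.le⟩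
  have hᾱ := tendsto_prod_one_sub_of_not_summable hβ' hns
  have hmean : Tendsto (fun n => Real.sqrt (∏ k ∈ range n, (1 - β k)) * g₀) atTop (𝓝 0) := by
    simpa using hᾱ.sqrt.mul_const g₀
  have hvar : Tendsto (fun n => (1 - ∏ k ∈ range n, (1 - β k)).toNNReal) atTop (𝓝 1) :=
    (continuous_real_toNNReal.tendsto' (1 - 0) 1 (by simp)).comp (tendsto_const_nhds.sub hᾱ)
  refine (tendsto_gaussianReal hmean hvar).congr fun n => ?_
  exact ProbabilityMeasure.toMeasure_injective
    (forwardProcess_eq_gaussianReal (μ := fun n => (μ n : Measure ℝ)) hβ' hμ0 hμ n).symm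
end
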